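/- For l ≤ −1 and l + δ + 1 < 0, and 0 < t < R ≤ 1, the integral ∫_{√t}^{R} r^{l−δ}(t+r)^{−3} r³ dr is bounded above by C·t^{l+1} for a constant C depending only on l, δ, R. -/

import Mathlib

/-!
Write `ε = -(l + δ + 1) > 0`. On `[√t, R]` the factor `(t + r)⁻³ r³` is at most `1`,
and since `2 (l + 1) ≤ 0` and `r ≥ √t`,
`r ^ (l - δ) = r ^ (2 (l + 1)) * r ^ (ε - 1) ≤ t ^ (l + 1) * r ^ (ε - 1)`.
As `ε - 1 > -1`, the remaining integral is at most `R ^ ε / ε`.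
-/

open Real

lemma rpow_neg_three_mul_pow_three_le_one {t x : ℝ} (ht : 0 ≤ t) (hx : 0 ≤ x) :
    (t + x) ^ (-3 : ℝ) * x ^ (3 : ℕ) ≤ 1 := by
  rcases hx.eq_or_lt with rfl | hx
  · simp
  have htx : 0 < t + x := by positivity
  rw [show (-3 : ℝ) = -((3 : ℕ) : ℝ) by norm_num, rpow_neg htx.le, rpow_natCast,
    inv_mul_le_one₀ (by positivity)]
  gcongr
  linarith

lemma rpow_two_mul_le_of_sqrt_le {t x p : ℝ} (ht : 0 < t) (hx : √t ≤ x) (hp : p ≤ 0) :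
    x ^ (2 * p) ≤ t ^ p :=
  calc x ^ (2 * p) ≤ √t ^ (2 * p) := rpow_le_rpow_of_nonpos (sqrt_pos.2 ht) hx (by linarith)
    _ = t ^ p := by rw [sqrt_eq_rpow, ← rpow_mul ht.le]; ring_nf

lemma integral_rpow_sub_one_le {a b ε : ℝ} (ha : 0 ≤ a) (hε : 0 < ε) :
    ∫ r in a..b, r ^ (ε - 1) ≤ b ^ ε / ε := by
  rw [integral_rpow (Or.inl (by linarith)), sub_add_cancel]
  gcongr
  exact sub_le_self _ (rpow_nonneg ha ε)

lemma continuousAt_weight {t p x : ℝ} (ht : 0 ≤ t) (hx : 0 < x) :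
    ContinuousAt (fun r : ℝ => r ^ p * (t + r) ^ (-3 : ℝ) * r ^ (3 : ℕ)) x :=
  ((continuousAt_id.rpow_const (Or.inl hx.ne')).mul
    ((continuousAt_const.add continuousAt_id).rpow_const
      (Or.inl (by positivity : 0 < t + x).ne'))).mul
    (continuousAt_id.pow 3)

lemma weight_le_of_sqrt_le {l δ t x : ℝ} (hl : l ≤ -1) (ht : 0 < t) (hx : √t ≤ x) :
    x ^ (l - δ) * (t + x) ^ (-3 : ℝ) * x ^ (3 : ℕ) ≤
      t ^ (l + 1) * x ^ (-(l + δ + 1) - 1) := by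
  have hx0 : 0 < x := (sqrt_pos.2 ht).trans_le hx
  have hsplit : x ^ (l - δ) = x ^ (2 * (l + 1)) * x ^ (-(l + δ + 1) - 1) := by
    rw [← rpow_add hx0]; ring_nf
  calc x ^ (l - δ) * (t + x) ^ (-3 : ℝ) * x ^ (3 : ℕ)
      = x ^ (l - δ) * ((t + x) ^ (-3 : ℝ) * x ^ (3 : ℕ)) := mul_assoc _ _ _
    _ ≤ x ^ (l - δ) :=
        mul_le_of_le_one_right (by positivity) (rpow_neg_three_mul_pow_three_le_one ht.le hx0.le)
    _ ≤ t ^ (l + 1) * x ^ (-(l + δ + 1) - 1) := by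
        rw [hsplit]
        gcongr
        exact rpow_two_mul_le_of_sqrt_le ht hx (by linarith)

theorem weighted_integral_estimate_outer_general (l δ R : ℝ) (hl : l ≤ -1) (h : l + δ + 1 < 0) :
    ∃ C : ℝ, 0 < C ∧ ∀ t : ℝ, 0 < t → t < R →
      ∫ r in (Real.sqrt t)..R, r ^ (l - δ) * (t + r) ^ (-3 : ℝ) * r ^ (3 : ℕ) ≤
        C * t ^ (l + 1) := by
  set ε := -(l + δ + 1)
  have hε : 0 < ε := by linarith
  refine ⟨max R 1 ^ ε / ε, by positivity, fun t ht htR => ?_⟩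
  have hs : 0 < √t := sqrt_pos.2 ht
  have hR : 0 < R := ht.trans htR
  rcases le_or_gt (√t) R with hsR | hRs
  · calc ∫ r in √t..R, r ^ (l - δ) * (t + r) ^ (-3 : ℝ) * r ^ (3 : ℕ)
        ≤ ∫ r in √t..R, t ^ (l + 1) * r ^ (ε - 1) := by
          refine intervalIntegral.integral_mono_on hsR ?_ ?_
            fun x hx => weight_le_of_sqrt_le hl ht hx.1
          · exact ContinuousOn.intervalIntegrable fun x hx => (continuousAt_weight ht.le
              (hs.trans_le (Set.uIcc_of_le hsR ▸ hx).1)).continuousWithinAt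
          · exact (intervalIntegral.intervalIntegrable_rpow' (by linarith)).const_mul _
      _ = t ^ (l + 1) * ∫ r in √t..R, r ^ (ε - 1) := intervalIntegral.integral_const_mul _ _
      _ ≤ t ^ (l + 1) * (R ^ ε / ε) := by gcongr; exact integral_rpow_sub_one_le hs.le hε
      _ ≤ max R 1 ^ ε / ε * t ^ (l + 1) := by
          rw [mul_comm]; gcongr; exact le_max_left _ _
  · have hneg : ∫ r in √t..R, r ^ (l - δ) * (t + r) ^ (-3 : ℝ) * r ^ (3 : ℕ) ≤ 0 := by
      rw [intervalIntegral.integral_symm, neg_nonpos]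
      refine intervalIntegral.integral_nonneg hRs.le fun x hx => ?_
      have : 0 < x := hR.trans_le hx.1
      positivity
    exact hneg.trans (by positivity)

/-- For `l ≤ −1`, `l + δ + 1 < 0` and `0 < t < R ≤ 1`, the integral
`∫_{√t}^{R} r^{l−δ} (t+r)^{−3} r³ dr` is bounded above by `C · t^{l+1}` for a constant `C`
depending only on `l`, `δ`, `R`. -/
theorem weighted_integral_estimate_outer (l δ R : ℝ) (hl : l ≤ -1) (h : l + δ + 1 < 0)
    (hR : R ≤ 1) :
    ∃ C : ℝ, 0 < C ∧ ∀ t : ℝ, 0 < t → t < R →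
      ∫ r in (Real.sqrt t)..R, r ^ (l - δ) * (t + r) ^ (-3 : ℝ) * r ^ (3 : ℕ) ≤
        C * t ^ (l + 1) :=
  weighted_integral_estimate_outer_general l δ R hl h
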